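/- arXiv:1801.07764 — 5 statements merged into one kernel-verified Lean document; each statement's English description precedes it below -/
import Mathlib

section
/- Let (X,d) be a metric space and T : X → X a map such that there exist constants a, b, c with 0 < a < 1, a + b = 1, c ≤ 1/2, and d(T x, T y) ≤ a · max(d(x,y), c·(d(x, T y) + d(y, T x))) + b · max(d(x, T x), d(y, T y)) for all x, y ∈ X. Then for all x, y ∈ X, d(x, y) ≤ ((2 - a)/(1 - a)) · (d(x, T x) + d(y, T y)). -/
theorem stmt_0 {X : Type*} [MetricSpace X] (T : X → X) (a b c : ℝ)
    (ha0 : 0 < a) (ha1 : a < 1) (hab : a + b = 1) (hc : c ≤ 1/2)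
    (hT : ∀ x y : X, dist (T x) (T y) ≤
      a * max (dist x y) (c * (dist x (T y) + dist y (T x))) +
      b * max (dist x (T x)) (dist y (T y))) :
    ∀ x y : X, dist x y ≤ ((2 - a)/(1 - a)) * (dist x (T x) + dist y (T y)) := by
  intro x y
  set u := dist x (T x) with hu
  set v := dist y (T y) with hv
  set D := dist x y with hD
  set L := dist (T x) (T y) with hL
  have hu0 : 0 ≤ u := dist_nonneg
  have hv0 : 0 ≤ v := dist_nonneg
  have hD0 : 0 ≤ D := dist_nonneg
  have hL0 : 0 ≤ L := dist_nonneg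
  have h1 : D ≤ u + L + v := by
    calc D ≤ dist x (T x) + dist (T x) y := dist_triangle _ _ _
    _ ≤ dist x (T x) + (dist (T x) (T y) + dist (T y) y) := by
        gcongr; exact dist_triangle _ _ _
    _ = u + L + v := by rw [dist_comm (T y) y]; ring
  have hxTy : dist x (T y) ≤ u + L := dist_triangle _ _ _
  have hyTx : dist y (T x) ≤ v + L := by
    calc dist y (T x) ≤ dist y (T y) + dist (T y) (T x) := dist_triangle _ _ _
    _ = v + L := by rw [dist_comm (T y) (T x)]
  have hm : max D (c * (dist x (T y) + dist y (T x))) ≤ max D ((u + v)/2 + L) := by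
    apply max_le (le_max_left _ _)
    rcases le_or_gt c 0 with h | h
    · have : c * (dist x (T y) + dist y (T x)) ≤ 0 := by
        apply mul_nonpos_of_nonpos_of_nonneg h
        positivity
      exact le_trans this (le_max_of_le_right (by linarith))
    · apply le_max_of_le_right
      have hs : dist x (T y) + dist y (T x) ≤ u + v + 2 * L := by linarith
      calc c * (dist x (T y) + dist y (T x)) ≤ (1/2) * (u + v + 2*L) := by
            apply mul_le_mul hc hs (by positivity) (by norm_num)
      _ = (u + v)/2 + L := by ring
  have key : L ≤ a * max D ((u+v)/2 + L) + b * (u + v) := by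
    have h2 := hT x y
    have h3 : max u v ≤ u + v := max_le (by linarith) (by linarith)
    have hb0 : 0 ≤ b := by linarith
    have := mul_le_mul_of_nonneg_left hm (le_of_lt ha0)
    have := mul_le_mul_of_nonneg_left h3 hb0
    linarith
  have ha1' : 0 < 1 - a := by linarith
  rw [div_mul_eq_mul_div, le_div_iff₀ ha1']
  rcases max_cases D ((u+v)/2 + L) with ⟨he, _⟩ | ⟨he, _⟩ <;> rw [he] at key <;> nlinarith
end

section
/- Let (X,d) be a metric space and T : X → X satisfy the Gregus–Ćirić contraction condition with constants 0 < a < 1, a + b = 1, c ≤ 1/2. Then for every x ∈ X, the sequence n ↦ d(T^n x, T^{n+1} x) is (weakly) decreasing: d(T^{n+1} x, T^{n+2} x) ≤ d(T^n x, T^{n+1} x) for all n ∈ ℕ. -/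
theorem stmt_1 {X : Type*} [MetricSpace X] (T : X → X) (a b c : ℝ)
    (ha0 : 0 < a) (ha1 : a < 1) (hab : a + b = 1) (hc : c ≤ 1/2)
    (hT : ∀ x y : X, dist (T x) (T y) ≤
      a * max (dist x y) (c * (dist x (T y) + dist y (T x))) +
      b * max (dist x (T x)) (dist y (T y))) :
    ∀ (x : X) (n : ℕ),
      dist (T^[n+1] x) (T^[n+2] x) ≤ dist (T^[n] x) (T^[n+1] x) := by
  intro x n
  set u := T^[n] x with hu
  have h1 : T^[n+1] x = T u := Function.iterate_succ_apply' T n x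
  have h2 : T^[n+2] x = T (T u) := by
    rw [Function.iterate_succ_apply' T (n+1) x, h1]
  rw [h1, h2]
  set p := dist u (T u) with hp
  set q := dist (T u) (T (T u)) with hq
  by_contra hlt
  push_neg at hlt
  have key := hT u (T u)
  rw [dist_self, add_zero, ← hp, ← hq] at key
  have hb : 0 < b := by linarith
  have hd0 : (0:ℝ) ≤ dist u (T (T u)) := dist_nonneg
  have hd : dist u (T (T u)) ≤ p + q := dist_triangle _ _ _
  have hcd : c * dist u (T (T u)) < q := by
    have h1 : c * dist u (T (T u)) ≤ (1/2) * dist u (T (T u)) :=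
      mul_le_mul_of_nonneg_right hc hd0
    nlinarith
  have hm1 : max p (c * dist u (T (T u))) < q := max_lt hlt hcd
  have hm2 : max p q = q := max_eq_right hlt.le
  rw [hm2] at key
  nlinarith [mul_lt_mul_of_pos_left hm1 ha0]
end

section
/- Let (X,d) be a metric space and T : X → X satisfy the Gregus–Ćirić contraction condition with constants 0 < a < 1, a + b = 1, c ≤ 1/2. Then for every x ∈ X there exists n ≥ 1 such that d(T^n x, T^{n+2} x) ≤ (2/(2 - a)) · d(x, T x). -/
/-!
Write `δ = d(x, Tx)` and `e n = d(Tⁿx, Tⁿ⁺²x)`. Since `c ≤ 1/2`, the contraction condition applied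
to `y, Ty` forces the steps `d(Tⁿx, Tⁿ⁺¹x)` to be non-increasing, hence bounded by `δ`. Applied to
`y, T²y` it gives, for every `n`, either `e (n+1) ≤ a e n + b δ` or `e (n+1) ≤ 2δ / (2 - a)`.
If the second alternative never held, then `e n - δ ≤ aⁿ (e 0 - δ) ≤ aⁿ δ`, which eventually drops
below `a δ / (2 - a)`.
-/

open Filter

def IsGregusCiricContraction {X : Type*} [MetricSpace X] (T : X → X) (a b c : ℝ) : Prop :=
  ∀ x y : X, dist (T x) (T y) ≤
    a * max (dist x y) (c * (dist x (T y) + dist y (T x))) +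
    b * max (dist x (T x)) (dist y (T y))

namespace IsGregusCiricContraction

variable {X : Type*} [MetricSpace X] {T : X → X} {a b c : ℝ}

theorem dist_map_map_le (hT : IsGregusCiricContraction T a b c) (ha : 0 < a) (hab : a + b = 1)
    (hc : c ≤ 1 / 2) (y : X) : dist (T y) (T (T y)) ≤ dist y (T y) := by
  by_contra! hlt
  have h := hT y (T y)
  rw [dist_self, add_zero, max_eq_right hlt.le] at h
  have hc' : c * dist y (T (T y)) ≤ (dist y (T y) + dist (T y) (T (T y))) / 2 := by
    nlinarith [dist_triangle y (T y) (T (T y)), dist_nonneg (x := y) (y := T (T y))]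
  have hmax : max (dist y (T y)) (c * dist y (T (T y))) ≤
      (dist y (T y) + dist (T y) (T (T y))) / 2 :=
    max_le (by linarith) hc'
  have hb : b * dist (T y) (T (T y)) = dist (T y) (T (T y)) - a * dist (T y) (T (T y)) := by
    linear_combination dist (T y) (T (T y)) * hab
  linarith [mul_le_mul_of_nonneg_left hmax ha.le, mul_pos ha (sub_pos.2 hlt)]

theorem dist_iterate_succ_le (hT : IsGregusCiricContraction T a b c) (ha : 0 < a)
    (hab : a + b = 1) (hc : c ≤ 1 / 2) (x : X) (n : ℕ) :
    dist (T^[n] x) (T^[n + 1] x) ≤ dist x (T x) := by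
  have hanti : Antitone fun n ↦ dist (T^[n] x) (T^[n + 1] x) :=
    antitone_nat_of_succ_le fun n ↦ by
      simpa only [Function.iterate_succ_apply'] using hT.dist_map_map_le ha hab hc (T^[n] x)
  simpa using hanti (Nat.zero_le n)

theorem dist_iterate_two_le (hT : IsGregusCiricContraction T a b c) (ha : 0 < a)
    (hab : a + b = 1) (hc : c ≤ 1 / 2) (x : X) : dist x (T^[2] x) ≤ 2 * dist x (T x) := by
  have h₁ := hT.dist_iterate_succ_le ha hab hc x 1
  simp only [Function.iterate_one] at h₁
  linarith [dist_triangle x (T x) (T^[2] x)]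

theorem dist_map_map_map_le_or (hT : IsGregusCiricContraction T a b c) (ha : 0 < a)
    (hb : 0 ≤ b) (hab : a + b = 1) (hc : c ≤ 1 / 2) (y : X) :
    dist (T y) (T (T (T y))) ≤ a * dist y (T (T y)) + b * dist y (T y) ∨
      (2 - a) * dist (T y) (T (T (T y))) ≤ 2 * dist y (T y) := by
  have h := hT y (T (T y))
  have h₁ := hT.dist_map_map_le ha hab hc y
  have h₂ := hT.dist_map_map_le ha hab hc (T y)
  have hb' : b * max (dist y (T y)) (dist (T (T y)) (T (T (T y)))) ≤ b * dist y (T y) :=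
    mul_le_mul_of_nonneg_left (max_le le_rfl (h₂.trans h₁)) hb
  have hc' : c * (dist y (T (T (T y))) + dist (T (T y)) (T y)) ≤
      (dist (T y) (T (T (T y))) + 2 * dist y (T y)) / 2 := by
    rw [dist_comm (T (T y))]
    nlinarith [dist_triangle y (T y) (T (T (T y))),
      add_nonneg (dist_nonneg (x := y) (y := T (T (T y)))) (dist_nonneg (x := T y) (y := T (T y)))]
  rcases le_total ((dist (T y) (T (T (T y))) + 2 * dist y (T y)) / 2) (dist y (T (T y))) with
    hle | hle
  · left
    rw [max_eq_left (hc'.trans hle)] at h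
    linarith
  · right
    have hmax := mul_le_mul_of_nonneg_left (max_le hle hc') ha.le
    linear_combination 2 * (h + hmax + hb') + 2 * dist y (T y) * hab

theorem dist_iterate_le_or (hT : IsGregusCiricContraction T a b c) (ha : 0 < a) (hb : 0 ≤ b)
    (hab : a + b = 1) (hc : c ≤ 1 / 2) (x : X) (n : ℕ) :
    dist (T^[n + 1] x) (T^[n + 3] x) ≤ a * dist (T^[n] x) (T^[n + 2] x) + b * dist x (T x) ∨
      (2 - a) * dist (T^[n + 1] x) (T^[n + 3] x) ≤ 2 * dist x (T x) := by
  have hstep := hT.dist_iterate_succ_le ha hab hc x n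
  simp only [Function.iterate_succ_apply'] at hstep ⊢
  rcases hT.dist_map_map_map_le_or ha hb hab hc (T^[n] x) with h | h
  · exact .inl (h.trans (by gcongr))
  · exact .inr (h.trans (by gcongr))

end IsGregusCiricContraction

theorem stmt_2 {X : Type*} [MetricSpace X] (T : X → X) (a b c : ℝ)
    (ha0 : 0 < a) (ha1 : a < 1) (hab : a + b = 1) (hc : c ≤ 1/2)
    (hT : ∀ x y : X, dist (T x) (T y) ≤
      a * max (dist x y) (c * (dist x (T y) + dist y (T x))) +
      b * max (dist x (T x)) (dist y (T y))) :
    ∀ x : X, ∃ n : ℕ, 1 ≤ n ∧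
      dist (T^[n] x) (T^[n+2] x) ≤ (2/(2 - a)) * dist x (T x) := by
  have hT : IsGregusCiricContraction T a b c := hT
  have hb : 0 ≤ b := by linarith
  have h2a : 0 < 2 - a := by linarith
  intro x
  by_contra! hcon
  set δ := dist x (T x)
  have hrec (n : ℕ) : dist (T^[n + 1] x) (T^[n + 3] x) - δ ≤
      a * (dist (T^[n] x) (T^[n + 2] x) - δ) := by
    have hlt : 2 / (2 - a) * δ < dist (T^[n + 1] x) (T^[n + 3] x) := hcon (n + 1) n.succ_pos
    rw [div_mul_eq_mul_div, div_lt_iff₀ h2a] at hlt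
    rcases hT.dist_iterate_le_or ha0 hb hab hc x n with h | h
    · linear_combination h + δ * hab
    · linarith
  obtain ⟨n, hn1, hna⟩ : ∃ n, 1 ≤ n ∧ a ^ n ≤ a / (2 - a) :=
    ((eventually_ge_atTop 1).and <| (tendsto_pow_atTop_nhds_zero_of_lt_one ha0.le ha1).eventually
      (ge_mem_nhds (by positivity))).exists
  have hgeom : dist (T^[n] x) (T^[n + 2] x) - δ ≤ a ^ n * (dist x (T^[2] x) - δ) :=
    le_geom (u := fun k ↦ dist (T^[k] x) (T^[k + 2] x) - δ) ha0.le n fun k _ ↦ hrec k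
  refine (hcon n hn1).not_ge ?_
  calc dist (T^[n] x) (T^[n + 2] x)
      ≤ δ + a ^ n * (dist x (T^[2] x) - δ) := by linarith
    _ ≤ δ + a ^ n * δ := by
      gcongr; linarith [hT.dist_iterate_two_le ha0 hab hc x]
    _ ≤ δ + a / (2 - a) * δ := by gcongr
    _ = 2 / (2 - a) * δ := by field_simp; ring
end

section
/- Let a, b, c be nonnegative reals with 0 < a < 1, a + b = 1, and c < 1/2. Let β be a real with 2c < β < 1 and set α = 1 - β. Then K := α·a·max(α + 2β/(2-a), c·(2 + 2β/(2-a))) + β²·a + b < 1. -/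
theorem stmt_3 (a b c β α : ℝ)
    (ha0 : 0 < a) (ha1 : a < 1) (hab : a + b = 1)
    (hc0 : 0 ≤ c) (hc : c < 1/2) (hcβ : 2*c < β) (hβ1 : β < 1)
    (hα : α = 1 - β) :
    α * a * max (α + 2*β/(2-a)) (c * (2 + 2*β/(2-a))) + β^2 * a + b < 1 := by
  subst hα
  have hβ0 : 0 < β := by linarith
  have h2a : (1:ℝ) < 2 - a := by linarith
  have hfrac : 2*β/(2-a) < 2*β := by
    rw [div_lt_iff₀ (by linarith)]
    nlinarith
  have hM : max ((1-β) + 2*β/(2-a)) (c * (2 + 2*β/(2-a))) < 1 + β := by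
    apply max_lt
    · linarith
    · nlinarith
  have hpos : 0 < (1-β) * a := by nlinarith
  nlinarith [mul_lt_mul_of_pos_left hM hpos]
end

section
/- Let (X,d) be a metric space, T : X → X, and suppose (z_n) is a sequence converging to ω ∈ X with lim d(z_n, T z_n) = 0, and T satisfies the Gregus–Ćirić contraction inequality with constants 0 < a < 1, a + b = 1, c ≤ 1/2 for all pairs (z_n, ω). Then T ω = ω. -/
theorem stmt_7 {X : Type*} [MetricSpace X] (T : X → X) (a b c : ℝ)
    (ha0 : 0 < a) (ha1 : a < 1) (hab : a + b = 1) (hc0 : 0 ≤ c) (hc : c ≤ 1/2)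
    (z : ℕ → X) (ω : X)
    (hconv : Filter.Tendsto z Filter.atTop (nhds ω))
    (hdisp : Filter.Tendsto (fun n => dist (z n) (T (z n))) Filter.atTop (nhds 0))
    (hT : ∀ n : ℕ, dist (T (z n)) (T ω) ≤
      a * max (dist (z n) ω) (c * (dist (z n) (T ω) + dist ω (T (z n)))) +
      b * max (dist (z n) (T (z n))) (dist ω (T ω))) :
    T ω = ω := by
  have hdz : Filter.Tendsto (fun n => dist (z n) ω) Filter.atTop (nhds 0) :=
    tendsto_iff_dist_tendsto_zero.mp hconv
  have hTz : Filter.Tendsto (fun n => T (z n)) Filter.atTop (nhds ω) := by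
    rw [tendsto_iff_dist_tendsto_zero]
    have h := hdisp.add hdz
    rw [add_zero] at h
    refine squeeze_zero (fun n => dist_nonneg) (fun n => ?_) h
    calc dist (T (z n)) ω ≤ dist (T (z n)) (z n) + dist (z n) ω := dist_triangle _ _ _
      _ = dist (z n) (T (z n)) + dist (z n) ω := by rw [dist_comm]
  set D := dist ω (T ω) with hD
  have hL : Filter.Tendsto (fun n => dist (T (z n)) (T ω)) Filter.atTop (nhds D) :=
    hTz.dist tendsto_const_nhds
  have h1 : Filter.Tendsto (fun n => dist (z n) (T ω)) Filter.atTop (nhds D) :=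
    hconv.dist tendsto_const_nhds
  have h2 : Filter.Tendsto (fun n => dist ω (T (z n))) Filter.atTop (nhds 0) := by
    have := (tendsto_const_nhds : Filter.Tendsto (fun _ : ℕ => ω) Filter.atTop (nhds ω)).dist hTz
    simpa using this
  have hR : Filter.Tendsto (fun n =>
      a * max (dist (z n) ω) (c * (dist (z n) (T ω) + dist ω (T (z n)))) +
      b * max (dist (z n) (T (z n))) (dist ω (T ω))) Filter.atTop
      (nhds (a * max 0 (c * (D + 0)) + b * max 0 D)) :=
    ((tendsto_const_nhds.mul (hdz.max (tendsto_const_nhds.mul (h1.add h2))))).add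
      (tendsto_const_nhds.mul (hdisp.max tendsto_const_nhds))
  have key : D ≤ a * max 0 (c * (D + 0)) + b * max 0 D :=
    le_of_tendsto_of_tendsto' hL hR hT
  have hD0 : 0 ≤ D := dist_nonneg
  rw [add_zero, max_eq_right (mul_nonneg hc0 hD0), max_eq_right hD0] at key
  have h3 : a * (c * D) ≤ a * ((1/2) * D) :=
    mul_le_mul_of_nonneg_left (mul_le_mul_of_nonneg_right hc hD0) ha0.le
  have : D = 0 := by nlinarith [mul_nonneg ha0.le hD0]
  exact dist_eq_zero.mp (by rw [dist_comm]; exact this)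
end
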